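/- arXiv:2602.23525 — 2 statements merged into one kernel-verified Lean document; each statement's English description precedes it below -/
import Mathlib

section
/- Define recursively, for each power of two n = 2^m, a map recfft2 taking a stride ι ∈ ℕ and an input X : ℕ → ℂ to an array Y of length n as follows: if n = 1 then Y[0] = X[0]; otherwise let E = recfft2 applied to (n/2, X∘(λ j, 2ι·j + offset 0), i.e. the even stride-2ι subsequence) and O = recfft2 applied to the subsequence starting at X[ι] with stride 2ι, and set Y[k] = E[k] + ω_n^k·O[k] and Y[k+n/2] = E[k] − ω_n^k·O[k] for 0 ≤ k < n/2. Then for every m ≥ 0, every stride ι, and every X, the output satisfies Y[k] = Σ_{ℓ=0}^{n−1} X[ℓ·ι]·ω_n^{ℓk} for all 0 ≤ k < n; that is, the depth-first recursive radix-2 decimation-in-time procedure of Algorithm 1 correctly computes the DFT of the stride-ι subsequence of X, with in-order output and no separate bit-reversal stage. -/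
/-- `dftRoot m` is the primitive `m`-th root of unity `ω_m = exp(-2πi/m)`. -/
noncomputable def dftRoot (m : ℕ) : ℂ := Complex.exp (-(2 * Real.pi * Complex.I) / m)

/-- Algorithm 1 (`recfft2`): the depth-first recursive radix-2 decimation-in-time FFT.
For `n = 2^m`, `recfft2 m ι X` is the length-`n` output array: for `n = 1` it returns
`X[0]`; otherwise it recursively transforms the even subsequence (stride `2ι`) and the
odd subsequence (starting at `X[ι]`, stride `2ι`) into `E` and `O`, and combines them
by the butterflies `Y[k] = E[k] + ω_n^k·O[k]`, `Y[k + n/2] = E[k] − ω_n^k·O[k]`. -/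
noncomputable def recfft2 : ℕ → ℕ → (ℕ → ℂ) → (ℕ → ℂ)
  | 0, _, X => fun _ => X 0
  | m + 1, ι, X => fun k =>
      let E := recfft2 m (2 * ι) X
      let O := recfft2 m (2 * ι) (fun j => X (j + ι))
      if k < 2 ^ m then
        E k + dftRoot (2 ^ (m + 1)) ^ k * O k
      else
        E (k - 2 ^ m) - dftRoot (2 ^ (m + 1)) ^ (k - 2 ^ m) * O (k - 2 ^ m)

lemma dftRoot_sq (n : ℕ) : dftRoot (2 * n) ^ 2 = dftRoot n := by
  unfold dftRoot
  rw [← Complex.exp_nat_mul]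
  congr 1
  push_cast
  rcases eq_or_ne (n : ℂ) 0 with h | h
  · simp [h]
  · field_simp

lemma dftRoot_pow_self (n : ℕ) (hn : n ≠ 0) : dftRoot n ^ n = 1 := by
  unfold dftRoot
  rw [← Complex.exp_nat_mul]
  have h : (n : ℂ) ≠ 0 := Nat.cast_ne_zero.2 hn
  have : (n : ℂ) * (-(2 * Real.pi * Complex.I) / n) = -(2 * Real.pi * Complex.I) := by
    field_simp
  rw [this, Complex.exp_neg, Complex.exp_two_pi_mul_I]
  norm_num

lemma dftRoot_two_mul_pow (n : ℕ) (hn : n ≠ 0) : dftRoot (2 * n) ^ n = -1 := by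
  unfold dftRoot
  rw [← Complex.exp_nat_mul]
  have h : (n : ℂ) ≠ 0 := Nat.cast_ne_zero.2 hn
  have : (n : ℂ) * (-(2 * Real.pi * Complex.I) / ((2 * n : ℕ) : ℂ)) = -(Real.pi * Complex.I) := by
    push_cast
    field_simp
  rw [this, Complex.exp_neg, Complex.exp_pi_mul_I]
  norm_num

lemma sum_split (N : ℕ) (f : ℕ → ℂ) :
    ∑ ℓ ∈ Finset.range (2 * N), f ℓ
      = ∑ j ∈ Finset.range N, f (2 * j) + ∑ j ∈ Finset.range N, f (2 * j + 1) := by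
  induction N with
  | zero => simp
  | succ N ih =>
    rw [show 2 * (N + 1) = (2 * N + 1) + 1 from by ring, Finset.sum_range_succ,
      Finset.sum_range_succ, ih, Finset.sum_range_succ, Finset.sum_range_succ]
    ring

/-- The depth-first recursive radix-2 decimation-in-time procedure of Algorithm 1
correctly computes the DFT of the stride-`ι` subsequence of `X`, with in-order
output and no separate bit-reversal stage. -/
theorem recfft2_correct (m ι : ℕ) (X : ℕ → ℂ) :
    ∀ k < 2 ^ m,
      recfft2 m ι X k = ∑ ℓ : Fin (2 ^ m), X ((ℓ : ℕ) * ι) * dftRoot (2 ^ m) ^ ((ℓ : ℕ) * k) := by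
  induction m generalizing ι X with
  | zero =>
    intro k hk
    interval_cases k
    simp [recfft2, dftRoot]
  | succ m ih =>
    intro k hk
    have hN : (2 : ℕ) ^ m ≠ 0 := pow_ne_zero _ two_ne_zero
    have h2 : (2 : ℕ) ^ (m + 1) = 2 * 2 ^ m := by ring
    have hsq : dftRoot (2 * 2 ^ m) ^ 2 = dftRoot (2 ^ m) := dftRoot_sq _
    have hneg : dftRoot (2 * 2 ^ m) ^ (2 ^ m) = -1 := dftRoot_two_mul_pow _ hN
    simp only [recfft2]
    rw [h2, Fin.sum_univ_eq_sum_range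
      (fun ℓ => X (ℓ * ι) * dftRoot (2 * 2 ^ m) ^ (ℓ * k)), sum_split]
    split_ifs with hk'
    · -- k < 2 ^ m
      rw [ih (2 * ι) X k hk', ih (2 * ι) (fun j => X (j + ι)) k hk',
        Fin.sum_univ_eq_sum_range
          (fun ℓ => X (ℓ * (2 * ι)) * dftRoot (2 ^ m) ^ (ℓ * k)),
        Fin.sum_univ_eq_sum_range
          (fun ℓ => X (ℓ * (2 * ι) + ι) * dftRoot (2 ^ m) ^ (ℓ * k))]
      have hS1 : ∑ j ∈ Finset.range (2 ^ m),
            X (2 * j * ι) * dftRoot (2 * 2 ^ m) ^ (2 * j * k)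
          = ∑ j ∈ Finset.range (2 ^ m),
            X (j * (2 * ι)) * dftRoot (2 ^ m) ^ (j * k) := by
        refine Finset.sum_congr rfl fun j hj => ?_
        rw [show 2 * j * ι = j * (2 * ι) from by ring, mul_assoc 2 j k, pow_mul, hsq]
      have hS2 : ∑ j ∈ Finset.range (2 ^ m),
            X ((2 * j + 1) * ι) * dftRoot (2 * 2 ^ m) ^ ((2 * j + 1) * k)
          = dftRoot (2 * 2 ^ m) ^ k * ∑ j ∈ Finset.range (2 ^ m),
            X (j * (2 * ι) + ι) * dftRoot (2 ^ m) ^ (j * k) := by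
        rw [Finset.mul_sum]
        refine Finset.sum_congr rfl fun j hj => ?_
        rw [show (2 * j + 1) * ι = j * (2 * ι) + ι from by ring,
          show (2 * j + 1) * k = 2 * (j * k) + k from by ring,
          pow_add, pow_mul, hsq]
        ring
      rw [hS1, hS2]
    · -- k ≥ 2 ^ m
      push_neg at hk'
      set k0 := k - 2 ^ m with hk0
      have hkeq : k = 2 ^ m + k0 := by omega
      have hk0lt : k0 < 2 ^ m := by omega
      rw [ih (2 * ι) X k0 hk0lt, ih (2 * ι) (fun j => X (j + ι)) k0 hk0lt,
        Fin.sum_univ_eq_sum_range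
          (fun ℓ => X (ℓ * (2 * ι)) * dftRoot (2 ^ m) ^ (ℓ * k0)),
        Fin.sum_univ_eq_sum_range
          (fun ℓ => X (ℓ * (2 * ι) + ι) * dftRoot (2 ^ m) ^ (ℓ * k0))]
      have hone : dftRoot (2 * 2 ^ m) ^ (2 * 2 ^ m) = 1 := by
        rw [pow_mul', hneg]; norm_num
      have hS1 : ∑ j ∈ Finset.range (2 ^ m),
            X (2 * j * ι) * dftRoot (2 * 2 ^ m) ^ (2 * j * k)
          = ∑ j ∈ Finset.range (2 ^ m),
            X (j * (2 * ι)) * dftRoot (2 ^ m) ^ (j * k0) := by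
        refine Finset.sum_congr rfl fun j hj => ?_
        rw [show 2 * j * k = 2 * 2 ^ m * j + 2 * (j * k0) from by rw [hkeq]; ring,
          pow_add, pow_mul, hone, one_pow, one_mul, pow_mul, hsq,
          show 2 * j * ι = j * (2 * ι) from by ring]
      have hS2 : ∑ j ∈ Finset.range (2 ^ m),
            X ((2 * j + 1) * ι) * dftRoot (2 * 2 ^ m) ^ ((2 * j + 1) * k)
          = -(dftRoot (2 * 2 ^ m) ^ k0 * ∑ j ∈ Finset.range (2 ^ m),
            X (j * (2 * ι) + ι) * dftRoot (2 ^ m) ^ (j * k0)) := by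
        rw [Finset.mul_sum, ← Finset.sum_neg_distrib]
        refine Finset.sum_congr rfl fun j hj => ?_
        rw [show (2 * j + 1) * k = 2 * 2 ^ m * j + 2 ^ m + (2 * (j * k0) + k0)
            from by rw [hkeq]; ring,
          pow_add, pow_add, pow_add, pow_mul, hone, one_pow, one_mul, hneg,
          pow_mul, hsq, show (2 * j + 1) * ι = j * (2 * ι) + ι from by ring]
        ring
      rw [hS1, hS2]
      ring
end

section
/- Let n = n₁·n₂ with gcd(n₁, n₂) = 1, let X : Fin n → ℂ, and let Y be the DFT of X. Then for every k with 0 ≤ k < n, Y[k] = Σ_{ℓ₁=0}^{n₁−1} Σ_{ℓ₂=0}^{n₂−1} X[(n₂·ℓ₁ + n₁·ℓ₂) mod n] · ω_{n₁}^{ℓ₁·(k mod n₁)} · ω_{n₂}^{ℓ₂·(k mod n₂)}. That is, under the Chinese-remainder re-indexing ℓ ↦ (n₂ℓ₁ + n₁ℓ₂) mod n of the input and k ↦ (k mod n₁, k mod n₂) of the output, the size-n DFT decomposes into a two-dimensional n₁ × n₂ DFT with no twiddle factors (the prime-factor algorithm). -/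
lemma dftRoot_pow_self_s8 (m : ℕ) (hm : 0 < m) : dftRoot m ^ m = 1 := by
  rw [dftRoot, ← Complex.exp_nat_mul]
  have : (m : ℂ) ≠ 0 := Nat.cast_ne_zero.mpr hm.ne'
  rw [mul_div_assoc', mul_comm, mul_div_assoc, div_self this, mul_one,
    Complex.exp_neg, Complex.exp_two_pi_mul_I, inv_one]

lemma dftRoot_pow_mod (m : ℕ) (hm : 0 < m) (a : ℕ) :
    dftRoot m ^ a = dftRoot m ^ (a % m) := by
  conv_lhs => rw [← Nat.div_add_mod a m]
  rw [pow_add, pow_mul, dftRoot_pow_self_s8 m hm, one_pow, one_mul]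

lemma dftRoot_pow_modEq (m : ℕ) (hm : 0 < m) {a b : ℕ} (h : a ≡ b [MOD m]) :
    dftRoot m ^ a = dftRoot m ^ b := by
  rw [dftRoot_pow_mod m hm a, dftRoot_pow_mod m hm b, h]

lemma dftRoot_mul_pow (n₁ n₂ : ℕ) (h₁ : n₁ ≠ 0) (h₂ : n₂ ≠ 0) :
    dftRoot (n₁ * n₂) ^ n₂ = dftRoot n₁ := by
  rw [dftRoot, dftRoot, ← Complex.exp_nat_mul]
  congr 1
  have h₁' : (n₁ : ℂ) ≠ 0 := Nat.cast_ne_zero.mpr h₁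
  have h₂' : (n₂ : ℂ) ≠ 0 := Nat.cast_ne_zero.mpr h₂
  push_cast
  field_simp

/-- The prime-factor algorithm: if `n = n₁·n₂` with `gcd(n₁,n₂) = 1`, then under the
Chinese-remainder re-indexing `ℓ ↦ (n₂ℓ₁ + n₁ℓ₂) mod n` of the input and
`k ↦ (k mod n₁, k mod n₂)` of the output, the size-`n` DFT decomposes into a
two-dimensional `n₁ × n₂` DFT with no twiddle factors. -/
theorem prime_factor_algorithm
    (n₁ n₂ : ℕ) (hcop : Nat.gcd n₁ n₂ = 1)
    (X Y : Fin (n₁ * n₂) → ℂ)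
    (hY : ∀ k : Fin (n₁ * n₂),
      Y k = ∑ ℓ : Fin (n₁ * n₂), X ℓ * dftRoot (n₁ * n₂) ^ ((ℓ : ℕ) * (k : ℕ)))
    (k : Fin (n₁ * n₂)) :
    Y k = ∑ ℓ₁ : Fin n₁, ∑ ℓ₂ : Fin n₂,
      X ⟨(n₂ * (ℓ₁ : ℕ) + n₁ * (ℓ₂ : ℕ)) % (n₁ * n₂),
          Nat.mod_lt _ (Nat.mul_pos ℓ₁.pos ℓ₂.pos)⟩ *
        dftRoot n₁ ^ ((ℓ₁ : ℕ) * ((k : ℕ) % n₁)) *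
        dftRoot n₂ ^ ((ℓ₂ : ℕ) * ((k : ℕ) % n₂)) := by
  have hn : 0 < n₁ * n₂ := k.pos
  have h₁ : 0 < n₁ := by
    rcases Nat.eq_zero_or_pos n₁ with h | h
    · simp [h] at hn
    · exact h
  have h₂ : 0 < n₂ := by
    rcases Nat.eq_zero_or_pos n₂ with h | h
    · simp [h] at hn
    · exact h
  haveI : NeZero n₁ := ⟨h₁.ne'⟩
  haveI : NeZero n₂ := ⟨h₂.ne'⟩
  -- the CRT re-indexing map
  set f : Fin n₁ × Fin n₂ → Fin (n₁ * n₂) := fun p =>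
    ⟨(n₂ * (p.1 : ℕ) + n₁ * (p.2 : ℕ)) % (n₁ * n₂), Nat.mod_lt _ hn⟩ with hf
  have hinj : Function.Injective f := by
    intro p q hpq
    have hmod : (n₂ * (p.1 : ℕ) + n₁ * (p.2 : ℕ)) ≡
        (n₂ * (q.1 : ℕ) + n₁ * (q.2 : ℕ)) [MOD n₁ * n₂] := congrArg Fin.val hpq
    have key : ∀ (m r : ℕ), Nat.Coprime r m →
        ∀ (a b : Fin m), (r * (a : ℕ) ≡ r * (b : ℕ) [MOD m]) → a = b := by
      intro m r hcr a b hab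
      have hcast : ((a : ℕ) : ZMod m) = ((b : ℕ) : ZMod m) := by
        have h' : ((r * (a : ℕ) : ℕ) : ZMod m) = ((r * (b : ℕ) : ℕ) : ZMod m) :=
          (ZMod.natCast_eq_natCast_iff _ _ _).mpr hab
        push_cast at h'
        haveI : NeZero m := ⟨a.pos.ne'⟩
        have hu : IsUnit ((r : ℕ) : ZMod m) := (ZMod.unitOfCoprime r hcr).isUnit
        exact hu.mul_left_cancel h'
      have := congrArg ZMod.val hcast
      rw [ZMod.val_natCast_of_lt a.isLt, ZMod.val_natCast_of_lt b.isLt] at this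
      exact Fin.ext this
    have h1 : p.1 = q.1 := by
      apply key n₁ n₂ (Nat.coprime_comm.mp hcop)
      have hd : n₁ ∣ n₁ * n₂ := dvd_mul_right n₁ n₂
      have hm := hmod.of_dvd hd
      have e1 : ∀ x y : ℕ, n₂ * x + n₁ * y ≡ n₂ * x [MOD n₁] := fun x y =>
        ((Nat.modEq_iff_dvd' (Nat.le_add_right _ _)).mpr ⟨y, by omega⟩).symm
      exact ((e1 _ _).symm.trans hm).trans (e1 _ _)
    have h2 : p.2 = q.2 := by
      apply key n₂ n₁ hcop
      have hd : n₂ ∣ n₁ * n₂ := dvd_mul_left n₂ n₁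
      have hm := hmod.of_dvd hd
      have e2 : ∀ x y : ℕ, n₂ * x + n₁ * y ≡ n₁ * y [MOD n₂] := fun x y => by
        have : n₂ * x + n₁ * y ≡ 0 + n₁ * y [MOD n₂] :=
          Nat.ModEq.add_right _ (Nat.modEq_zero_iff_dvd.mpr ⟨x, rfl⟩)
        simpa using this
      exact ((e2 _ _).symm.trans hm).trans (e2 _ _)
    exact Prod.ext h1 h2
  have hbij : Function.Bijective f :=
    (Fintype.bijective_iff_injective_and_card f).mpr ⟨hinj, by simp⟩
  have step : (∑ ℓ : Fin (n₁ * n₂), X ℓ * dftRoot (n₁ * n₂) ^ ((ℓ : ℕ) * (k : ℕ)))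
      = ∑ p : Fin n₁ × Fin n₂, X (f p) * dftRoot (n₁ * n₂) ^ (((f p) : ℕ) * (k : ℕ)) :=
    (Fintype.sum_bijective f hbij _ _ (fun p => rfl)).symm
  rw [hY k, step, Fintype.sum_prod_type]
  refine Finset.sum_congr rfl fun ℓ₁ _ => Finset.sum_congr rfl fun ℓ₂ _ => ?_
  simp only [hf]
  rw [mul_assoc]
  congr 1
  -- root-of-unity computation
  have hroot₁ : dftRoot (n₁ * n₂) ^ n₂ = dftRoot n₁ := dftRoot_mul_pow n₁ n₂ h₁.ne' h₂.ne'
  have hroot₂ : dftRoot (n₁ * n₂) ^ n₁ = dftRoot n₂ := by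
    rw [mul_comm n₁ n₂] ; exact dftRoot_mul_pow n₂ n₁ h₂.ne' h₁.ne'
  calc dftRoot (n₁ * n₂) ^ ((n₂ * (ℓ₁ : ℕ) + n₁ * (ℓ₂ : ℕ)) % (n₁ * n₂) * (k : ℕ))
      = dftRoot (n₁ * n₂) ^ ((n₂ * (ℓ₁ : ℕ) + n₁ * (ℓ₂ : ℕ)) * (k : ℕ)) :=
        dftRoot_pow_modEq _ hn ((Nat.mod_modEq _ _).mul_right _)
    _ = dftRoot (n₁ * n₂) ^ (n₂ * ((ℓ₁ : ℕ) * (k : ℕ)) + n₁ * ((ℓ₂ : ℕ) * (k : ℕ))) := by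
        ring_nf
    _ = (dftRoot (n₁ * n₂) ^ n₂) ^ ((ℓ₁ : ℕ) * (k : ℕ)) *
        (dftRoot (n₁ * n₂) ^ n₁) ^ ((ℓ₂ : ℕ) * (k : ℕ)) := by
        simp [pow_add, pow_mul]
    _ = dftRoot n₁ ^ ((ℓ₁ : ℕ) * ((k : ℕ) % n₁)) * dftRoot n₂ ^ ((ℓ₂ : ℕ) * ((k : ℕ) % n₂)) := by
        rw [hroot₁, hroot₂]
        congr 1
        · exact dftRoot_pow_modEq _ h₁ ((Nat.mod_modEq _ _).symm.mul_left _)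
        · exact dftRoot_pow_modEq _ h₂ ((Nat.mod_modEq _ _).symm.mul_left _)
end
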